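/- Consider Phragmén's sequential rule on the election with disjoint candidate sets A = {a_1,…,a_k} and B = {b_1,…,b_k}, voters v_{i,j} (i,j ∈ [k]) approving {a_i, b_j}, one voter v^s with empty approval set, and tie-breaking order b_1 ≻ ⋯ ≻ b_k ≻ a_1 ≻ ⋯ ≻ a_k. Then Phragmén outputs B. If instead v^s approves a_1, then Phragmén outputs A: a_1 is purchased at time 1/(k+1) and then a_2,…,a_k are purchased at time 1/k, since for each b_i one of its k supporters has already paid for a_1 at time 1/(k+1). Hence Phragmén is k-Add-robust. -/

import Mathlib

open Finset

/-- The set of voters approving candidate `c`. -/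
def supporters {V C : Type*} [Fintype V] [DecidableEq C]
    (A : V → Finset C) (c : C) : Finset V :=
  Finset.univ.filter (fun v => c ∈ A v)

/-- One step of Phragmén's sequential rule. The state is a pair: the selected
committee and the voters' current balances. Candidate `c` is purchased as soon
as its supporters jointly hold one unit of money; `δ` is the additional time
needed, which must be minimal among unselected candidates with supporters, with
ties broken by the order `tb` (smaller = preferred). Supporters of `c` pay
(balances reset to 0), all other voters keep earning. -/
def PhragmenStep {V C : Type*} [Fintype V] [DecidableEq C]
    (A : V → Finset C) (tb : C → ℕ)
    (s s' : Finset C × (V → ℚ)) : Prop :=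
  ∃ (c : C) (δ : ℚ),
    c ∉ s.1 ∧ (supporters A c).Nonempty ∧
    δ = (1 - ∑ v ∈ supporters A c, s.2 v) / ((supporters A c).card : ℚ) ∧
    (∀ d, d ∉ s.1 → (supporters A d).Nonempty →
      δ ≤ (1 - ∑ v ∈ supporters A d, s.2 v) / ((supporters A d).card : ℚ)) ∧
    (∀ d, d ∉ s.1 → (supporters A d).Nonempty →
      (1 - ∑ v ∈ supporters A d, s.2 v) / ((supporters A d).card : ℚ) = δ →
      tb c ≤ tb d) ∧
    s'.1 = insert c s.1 ∧
    s'.2 = fun v => if c ∈ A v then 0 else s.2 v + δ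

/-- `PhragmenChain A tb n s`: state `s` is reached after `n` purchases of
Phragmén's sequential rule, starting from the empty committee and zero balances. -/
def PhragmenChain {V C : Type*} [Fintype V] [DecidableEq C]
    (A : V → Finset C) (tb : C → ℕ) : ℕ → Finset C × (V → ℚ) → Prop
  | 0, s => s.1 = ∅ ∧ s.2 = fun _ => 0
  | n + 1, s => ∃ s', PhragmenChain A tb n s' ∧ PhragmenStep A tb s' s

/-- Candidates `a_1, …, a_k` (left) and `b_1, …, b_k` (right). -/
abbrev PCand (k : ℕ) := Fin k ⊕ Fin k

def pAset (k : ℕ) : Finset (PCand k) := Finset.univ.image Sum.inl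
def pBset (k : ℕ) : Finset (PCand k) := Finset.univ.image Sum.inr

/-- Tie-breaking order `b_1 ≻ ⋯ ≻ b_k ≻ a_1 ≻ ⋯ ≻ a_k` (smaller = preferred). -/
def pTb (k : ℕ) : PCand k → ℕ := Sum.elim (fun i => k + (i : ℕ)) (fun j => (j : ℕ))

/-- Voters `v_{i,j}` approving `{a_i, b_j}` and a voter `v^s` with empty approval set. -/
def pProfile (k : ℕ) : (Fin k × Fin k) ⊕ Unit → Finset (PCand k)
  | Sum.inl (i, j) => {Sum.inl i, Sum.inr j}
  | Sum.inr _ => ∅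

/-- The profile after adding an approval for `a_1` to `v^s`'s vote. -/
def pProfile' (k : ℕ) (hk : 0 < k) : (Fin k × Fin k) ⊕ Unit → Finset (PCand k) :=
  Function.update (pProfile k) (Sum.inr ())
    (insert (Sum.inl ⟨0, hk⟩) (pProfile k (Sum.inr ())))

/-!
Both runs are computed in closed form and checked one purchase at a time. In the original election
every candidate has `k` supporters, so all become affordable at time `1/k` and the tie-breaking
picks `b_1`; from then on every remaining `b_j` is affordable at once, its supporters still holding
`1/k` each, while every `a_i` has a supporter who has just paid. With the extra approval, `a_1` has
`k + 1` supporters and is bought at time `1/(k+1)`; at time `1/k` all remaining `a_i` become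
affordable together, strictly before any `b_j` (its supporter `v_{1,j}` has paid), and are bought
one after another at that moment. Since the tie-breaking order is injective, a state has at most
one successor, so these runs are the only ones.

In the code `a_{i+1}` is `inl i` and `b_{j+1}` is `inr j`.
-/

section Phragmen

variable {V C : Type*} [Fintype V] [DecidableEq C] (A : V → Finset C)

lemma mem_supporters {c : C} {v : V} : v ∈ supporters A c ↔ c ∈ A v := by
  simp [supporters]

def waitTime (μ : V → ℚ) (c : C) : ℚ :=
  (1 - ∑ v ∈ supporters A c, μ v) / (supporters A c).card

variable {A}

theorem phragmenStep_insert {tb : C → ℕ} {S : Finset C} {μ μ' : V → ℚ} {c : C}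
    (hc : c ∉ S) (hne : (supporters A c).Nonempty)
    (hfirst : ∀ d ∉ insert c S, (supporters A d).Nonempty →
      waitTime A μ c < waitTime A μ d ∨ waitTime A μ c = waitTime A μ d ∧ tb c ≤ tb d)
    (hμ' : ∀ v, μ' v = if c ∈ A v then 0 else μ v + waitTime A μ c) :
    PhragmenStep A tb (S, μ) (insert c S, μ') := by
  have hfirst' : ∀ d ∉ S, (supporters A d).Nonempty → waitTime A μ c < waitTime A μ d ∨
      waitTime A μ c = waitTime A μ d ∧ tb c ≤ tb d := by
    intro d hd hnd
    rcases eq_or_ne d c with rfl | hdc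
    · exact .inr ⟨rfl, le_rfl⟩
    · exact hfirst d (by simp [hd, hdc]) hnd
  refine ⟨c, waitTime A μ c, hc, hne, rfl, fun d hd hnd => ?_, fun d hd hnd heq => ?_, rfl,
    funext hμ'⟩
  · rcases hfirst' d hd hnd with h | h
    exacts [h.le, h.1.le]
  · rcases hfirst' d hd hnd with h | h
    exacts [absurd heq h.ne', h.2]

theorem PhragmenStep.unique {tb : C → ℕ} (htb : Function.Injective tb)
    {s s₁ s₂ : Finset C × (V → ℚ)} (h₁ : PhragmenStep A tb s s₁)
    (h₂ : PhragmenStep A tb s s₂) : s₁ = s₂ := by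
  obtain ⟨c₁, δ₁, hc₁, hne₁, rfl, hmin₁, htie₁, hS₁, hμ₁⟩ := h₁
  obtain ⟨c₂, δ₂, hc₂, hne₂, rfl, hmin₂, htie₂, hS₂, hμ₂⟩ := h₂
  have hδ := le_antisymm (hmin₁ c₂ hc₂ hne₂) (hmin₂ c₁ hc₁ hne₁)
  have hc : c₁ = c₂ :=
    htb <| le_antisymm (htie₁ c₂ hc₂ hne₂ hδ.symm) (htie₂ c₁ hc₁ hne₁ hδ)
  subst hc
  exact Prod.ext (hS₁.trans hS₂.symm) (hμ₁.trans hμ₂.symm)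

theorem PhragmenChain.unique {tb : C → ℕ} (htb : Function.Injective tb) :
    ∀ {n : ℕ} {s₁ s₂ : Finset C × (V → ℚ)},
      PhragmenChain A tb n s₁ → PhragmenChain A tb n s₂ → s₁ = s₂
  | 0, _, _, ⟨h₁, h₁'⟩, ⟨h₂, h₂'⟩ =>
    Prod.ext (h₁.trans h₂.symm) (h₁'.trans h₂'.symm)
  | _ + 1, _, _, ⟨_, ht₁, h₁⟩, ⟨_, ht₂, h₂⟩ => by
    cases PhragmenChain.unique htb ht₁ ht₂
    exact h₁.unique htb h₂

variable [DecidableEq V]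

lemma supporters_update_insert_of_ne (A : V → Finset C) (v : V) {c d : C} (h : d ≠ c) :
    supporters (Function.update A v (insert c (A v))) d = supporters A d := by
  ext w
  rcases eq_or_ne w v with rfl | hw <;> simp [mem_supporters, Function.update_of_ne, *]

lemma supporters_update_insert_self (A : V → Finset C) (v : V) (c : C) :
    supporters (Function.update A v (insert c (A v))) c = insert v (supporters A c) := by
  ext w
  rcases eq_or_ne w v with rfl | hw <;> simp [mem_supporters, Function.update_of_ne, *]

end Phragmen

open Function Sum

section Election

variable {k : ℕ}

lemma supporters_pProfile_inl (i : Fin k) :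
    supporters (pProfile k) (inl i) =
      univ.map ((Embedding.sectR i (Fin k)).trans Embedding.inl) := by
  ext (⟨i', j⟩ | ⟨⟩) <;> simp [mem_supporters, pProfile, eq_comm]

lemma supporters_pProfile_inr (j : Fin k) :
    supporters (pProfile k) (inr j) =
      univ.map ((Embedding.sectL (Fin k) j).trans Embedding.inl) := by
  ext (⟨i, j'⟩ | ⟨⟩) <;> simp [mem_supporters, pProfile, eq_comm]

lemma waitTime_pProfile_inl (μ : (Fin k × Fin k) ⊕ Unit → ℚ) (i : Fin k) :
    waitTime (pProfile k) μ (inl i) = (1 - ∑ j, μ (inl (i, j))) / k := by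
  simp [waitTime, supporters_pProfile_inl]

lemma waitTime_pProfile_inr (μ : (Fin k × Fin k) ⊕ Unit → ℚ) (j : Fin k) :
    waitTime (pProfile k) μ (inr j) = (1 - ∑ i, μ (inl (i, j))) / k := by
  simp [waitTime, supporters_pProfile_inr]

lemma sum_inv_card_fin (hk : 0 < k) : ∑ _i : Fin k, (k : ℚ)⁻¹ = 1 := by
  simp [hk.ne']

lemma waitTime_pProfile_zero (c : PCand k) : waitTime (pProfile k) 0 c = (k : ℚ)⁻¹ := by
  rcases c with i | j
  · simp [waitTime_pProfile_inl]
  · simp [waitTime_pProfile_inr]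

lemma waitTime_pProfile'_of_ne (hk : 0 < k) (μ : (Fin k × Fin k) ⊕ Unit → ℚ) {c : PCand k}
    (hc : c ≠ inl ⟨0, hk⟩) : waitTime (pProfile' k hk) μ c = waitTime (pProfile k) μ c := by
  rw [waitTime, pProfile', supporters_update_insert_of_ne _ _ hc, waitTime]

lemma waitTime_pProfile'_inl (hk : 0 < k) (μ : (Fin k × Fin k) ⊕ Unit → ℚ) {i : Fin k}
    (hi : (i : ℕ) ≠ 0) :
    waitTime (pProfile' k hk) μ (inl i) = (1 - ∑ j, μ (inl (i, j))) / k := by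
  rw [waitTime_pProfile'_of_ne hk μ (by simpa [Fin.ext_iff] using hi), waitTime_pProfile_inl]

lemma waitTime_pProfile'_inr (hk : 0 < k) (μ : (Fin k × Fin k) ⊕ Unit → ℚ) (j : Fin k) :
    waitTime (pProfile' k hk) μ (inr j) = (1 - ∑ i, μ (inl (i, j))) / k := by
  rw [waitTime_pProfile'_of_ne hk μ (by simp), waitTime_pProfile_inr]

lemma waitTime_pProfile'_inl_zero (hk : 0 < k) (μ : (Fin k × Fin k) ⊕ Unit → ℚ) :
    waitTime (pProfile' k hk) μ (inl ⟨0, hk⟩) =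
      (1 - (μ (inr ()) + ∑ j, μ (inl (⟨0, hk⟩, j)))) / (k + 1) := by
  rw [waitTime, pProfile', supporters_update_insert_self, supporters_pProfile_inl,
    sum_insert (by simp), card_insert_of_notMem (by simp)]
  simp

lemma supporters_pProfile_nonempty (hk : 0 < k) (c : PCand k) :
    (supporters (pProfile k) c).Nonempty := by
  rcases c with i | j
  · exact ⟨inl (i, ⟨0, hk⟩), by simp [mem_supporters, pProfile]⟩
  · exact ⟨inl (⟨0, hk⟩, j), by simp [mem_supporters, pProfile]⟩

lemma supporters_pProfile'_nonempty (hk : 0 < k) (c : PCand k) :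
    (supporters (pProfile' k hk) c).Nonempty := by
  rcases c with i | j
  · exact ⟨inl (i, ⟨0, hk⟩), by simp [mem_supporters, pProfile', pProfile]⟩
  · exact ⟨inl (⟨0, hk⟩, j), by simp [mem_supporters, pProfile', pProfile]⟩

lemma pTb_injective : Injective (pTb k) := by
  rintro (i | i) (j | j) h <;> simp only [pTb, Sum.elim_inl, Sum.elim_inr] at h <;>
    grind

end Election

section RunB

variable {k : ℕ}

def firstB (k m : ℕ) : Finset (PCand k) := (univ.filter fun j : Fin k => (j : ℕ) < m).map .inr

def balanceB (k m : ℕ) : (Fin k × Fin k) ⊕ Unit → ℚ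
  | inl (_, j) => if (j : ℕ) < m then 0 else (k : ℚ)⁻¹
  | inr _ => (k : ℚ)⁻¹

@[simp] lemma firstB_zero : firstB k 0 = ∅ := by
  simp [firstB]

@[simp] lemma inl_notMem_firstB {m : ℕ} {i : Fin k} : inl i ∉ firstB k m := by
  simp [firstB]

@[simp] lemma inr_mem_firstB {m : ℕ} {j : Fin k} : inr j ∈ firstB k m ↔ (j : ℕ) < m := by
  simp [firstB]

lemma insert_firstB {m : ℕ} (hm : m < k) :
    insert (inr ⟨m, hm⟩) (firstB k m) = firstB k (m + 1) := by
  ext (i | j) <;> simp [Fin.ext_iff]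
  omega

lemma phragmenStep_pProfile_firstB_one (hk : 0 < k) :
    PhragmenStep (pProfile k) (pTb k) (∅, 0) (firstB k 1, balanceB k 1) := by
  rw [← firstB_zero, ← insert_firstB hk]
  refine phragmenStep_insert (by simp) (supporters_pProfile_nonempty hk _) (fun d _ _ => ?_) ?_
  · exact .inr ⟨by rw [waitTime_pProfile_zero, waitTime_pProfile_zero], by simp [pTb]⟩
  · rintro (⟨i, j⟩ | ⟨⟩) <;>
      simp [balanceB, pProfile, waitTime_pProfile_zero, Fin.ext_iff, eq_comm]

lemma phragmenStep_pProfile_firstB_succ {m : ℕ} (hm₀ : 0 < m) (hm : m < k) :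
    PhragmenStep (pProfile k) (pTb k) (firstB k m, balanceB k m)
      (firstB k (m + 1), balanceB k (m + 1)) := by
  have hk : 0 < k := hm₀.trans hm
  have hwait : waitTime (pProfile k) (balanceB k m) (inr ⟨m, hm⟩) = 0 := by
    simp [waitTime_pProfile_inr, balanceB, sum_inv_card_fin hk]
  rw [← insert_firstB hm]
  refine phragmenStep_insert (by simp) (supporters_pProfile_nonempty hk _) (fun d hd _ => ?_) ?_
  · rw [hwait]
    rcases d with i | j
    · refine .inl ?_
      rw [waitTime_pProfile_inl]
      refine div_pos (sub_pos.2 ?_) (by positivity)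
      calc ∑ j, balanceB k m (inl (i, j)) < ∑ _j : Fin k, (k : ℚ)⁻¹ :=
            sum_lt_sum (fun j _ => by simp only [balanceB]; split_ifs <;> simp)
              ⟨⟨0, hk⟩, mem_univ _, by simp [balanceB, hm₀, hk]⟩
        _ = 1 := sum_inv_card_fin hk
    · simp only [mem_insert, inr_mem_firstB, not_or, not_lt] at hd
      refine .inr ⟨?_, hd.2⟩
      simp [waitTime_pProfile_inr, balanceB, sum_inv_card_fin hk, not_lt.2 hd.2]
  · rintro (⟨i, j⟩ | ⟨⟩)
    · simp only [balanceB, pProfile, hwait, mem_insert, mem_singleton, reduceCtorEq, inr.injEq,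
        Fin.ext_iff, false_or, add_zero]
      split_ifs <;> first | rfl | omega
    · simp [balanceB, pProfile, hwait]

lemma phragmenChain_pProfile_firstB (hk : 0 < k) :
    ∀ m, 0 < m → m ≤ k → PhragmenChain (pProfile k) (pTb k) m (firstB k m, balanceB k m)
  | 1, _, _ => ⟨(∅, 0), ⟨rfl, rfl⟩, phragmenStep_pProfile_firstB_one hk⟩
  | m + 2, _, hm =>
    ⟨_, phragmenChain_pProfile_firstB hk (m + 1) m.succ_pos (by omega),
      phragmenStep_pProfile_firstB_succ m.succ_pos hm⟩

lemma firstB_self : firstB k k = pBset k := by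
  ext (i | j) <;> simp [pBset]

end RunB

section RunA

variable {k : ℕ}

def firstA (k m : ℕ) : Finset (PCand k) := (univ.filter fun i : Fin k => (i : ℕ) < m).map .inl

def balanceA₁ (k : ℕ) : (Fin k × Fin k) ⊕ Unit → ℚ
  | inl (i, _) => if (i : ℕ) = 0 then 0 else ((k : ℚ) + 1)⁻¹
  | inr _ => 0

/-- For `2 ≤ m`: the voters who paid for `a_1` have since earned `1/k - 1/(k+1)`. -/
def balanceA (k m : ℕ) : (Fin k × Fin k) ⊕ Unit → ℚ
  | inl (i, _) =>
    if (i : ℕ) = 0 then ((k : ℚ) * (k + 1))⁻¹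
    else if (i : ℕ) < m then 0 else (k : ℚ)⁻¹
  | inr _ => ((k : ℚ) * (k + 1))⁻¹

@[simp] lemma firstA_zero : firstA k 0 = ∅ := by
  simp [firstA]

@[simp] lemma inl_mem_firstA {m : ℕ} {i : Fin k} : inl i ∈ firstA k m ↔ (i : ℕ) < m := by
  simp [firstA]

@[simp] lemma inr_notMem_firstA {m : ℕ} {j : Fin k} : inr j ∉ firstA k m := by
  simp [firstA]

lemma insert_firstA {m : ℕ} (hm : m < k) :
    insert (inl ⟨m, hm⟩) (firstA k m) = firstA k (m + 1) := by
  ext (i | j) <;> simp [Fin.ext_iff]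
  omega

lemma firstA_self : firstA k k = pAset k := by
  ext (i | j) <;> simp [pAset]

lemma pProfile'_inl (hk : 0 < k) (p : Fin k × Fin k) :
    pProfile' k hk (inl p) = pProfile k (inl p) :=
  Function.update_of_ne (by simp) _ _

lemma pProfile'_inr (hk : 0 < k) (u : Unit) : pProfile' k hk (inr u) = {inl ⟨0, hk⟩} := by
  simp [pProfile', pProfile]

lemma phragmenStep_pProfile'_firstA_one (hk : 0 < k) :
    PhragmenStep (pProfile' k hk) (pTb k) (∅, 0) (firstA k 1, balanceA₁ k) := by
  have hwait : waitTime (pProfile' k hk) 0 (inl ⟨0, hk⟩) = ((k : ℚ) + 1)⁻¹ := by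
    simp [waitTime_pProfile'_inl_zero]
  rw [← firstA_zero, ← insert_firstA hk]
  refine phragmenStep_insert (by simp) (supporters_pProfile'_nonempty hk _)
    (fun d hd _ => .inl ?_) ?_
  · rw [mem_insert, not_or] at hd
    rw [hwait, waitTime_pProfile'_of_ne hk _ hd.1, waitTime_pProfile_zero]
    exact inv_strictAnti₀ (by positivity) (lt_add_one _)
  · rintro (⟨i, j⟩ | ⟨⟩) <;>
      simp [balanceA₁, pProfile'_inl, pProfile'_inr, pProfile, hwait, Fin.ext_iff, eq_comm]

lemma inv_add_one_add_inv_mul_add_one (hk : 0 < k) :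
    ((k : ℚ) + 1)⁻¹ + ((k : ℚ) * (k + 1))⁻¹ = (k : ℚ)⁻¹ := by
  field_simp

lemma phragmenStep_pProfile'_firstA_two (hk : 0 < k) (hk₁ : 1 < k) :
    PhragmenStep (pProfile' k hk) (pTb k) (firstA k 1, balanceA₁ k)
      (firstA k 2, balanceA k 2) := by
  have hrow : ∀ i : Fin k, (i : ℕ) ≠ 0 →
      ∑ j, balanceA₁ k (inl (i, j)) = k * ((k : ℚ) + 1)⁻¹ := by
    intro i hi
    simp [balanceA₁, hi]
  have hwait :
      waitTime (pProfile' k hk) (balanceA₁ k) (inl ⟨1, hk₁⟩) =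
        ((k : ℚ) * (k + 1))⁻¹ := by
    rw [waitTime_pProfile'_inl hk _ one_ne_zero, hrow _ one_ne_zero]
    field_simp
    ring
  rw [← insert_firstA hk₁]
  refine phragmenStep_insert (by simp) (supporters_pProfile'_nonempty hk _) (fun d hd _ => ?_) ?_
  · rcases d with i | j
    · simp only [mem_insert, inl_mem_firstA, inl.injEq, Fin.ext_iff, not_or] at hd
      have hi : (i : ℕ) ≠ 0 := by omega
      refine .inr ⟨?_, by simp [pTb]; omega⟩
      rw [waitTime_pProfile'_inl hk _ hi, waitTime_pProfile'_inl hk _ one_ne_zero, hrow _ hi,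
        hrow _ one_ne_zero]
    · refine .inl ?_
      rw [waitTime_pProfile'_inl hk _ one_ne_zero, waitTime_pProfile'_inr, hrow _ one_ne_zero]
      refine div_lt_div_of_pos_right (sub_lt_sub_left ?_ _) (by positivity)
      calc ∑ i, balanceA₁ k (inl (i, j)) < ∑ _i : Fin k, ((k : ℚ) + 1)⁻¹ :=
            sum_lt_sum
              (fun i _ => by simp only [balanceA₁]; split_ifs; exacts [by positivity, le_rfl])
              ⟨⟨0, hk⟩, mem_univ _, by simp [balanceA₁]; positivity⟩
        _ = k * ((k : ℚ) + 1)⁻¹ := by simp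
  · rintro (⟨i, j⟩ | _)
    · simp only [balanceA, balanceA₁, pProfile'_inl, pProfile, hwait, mem_insert, mem_singleton,
        reduceCtorEq, inl.injEq, Fin.ext_iff, or_false]
      split_ifs <;> first | omega | rw [inv_add_one_add_inv_mul_add_one hk] | simp
    · simp [balanceA, balanceA₁, pProfile'_inr, hwait]

lemma phragmenStep_pProfile'_firstA_succ (hk : 0 < k) {m : ℕ} (hm₂ : 2 ≤ m) (hm : m < k) :
    PhragmenStep (pProfile' k hk) (pTb k) (firstA k m, balanceA k m)
      (firstA k (m + 1), balanceA k (m + 1)) := by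
  have hrow : ∀ i : Fin k, m ≤ i → waitTime (pProfile' k hk) (balanceA k m) (inl i) = 0 := by
    intro i hi
    rw [waitTime_pProfile'_inl hk _ (by omega)]
    simp [balanceA, sum_inv_card_fin hk, show (i : ℕ) ≠ 0 by omega, not_lt.2 hi]
  have hwait := hrow ⟨m, hm⟩ le_rfl
  rw [← insert_firstA hm]
  refine phragmenStep_insert (by simp) (supporters_pProfile'_nonempty hk _) (fun d hd _ => ?_) ?_
  · rw [hwait]
    rcases d with i | j
    · simp only [mem_insert, inl_mem_firstA, not_or, not_lt] at hd
      exact .inr ⟨(hrow i hd.2).symm, by simpa [pTb] using hd.2⟩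
    · refine .inl ?_
      rw [waitTime_pProfile'_inr]
      refine div_pos (sub_pos.2 ?_) (by positivity)
      have hle : ∀ i, balanceA k m (inl (i, j)) ≤ (k : ℚ)⁻¹ := by
        intro i
        simp only [balanceA]
        split_ifs
        exacts [inv_anti₀ (by positivity) (le_mul_of_one_le_right (by positivity) (by simp)),
          by positivity, le_rfl]
      calc ∑ i, balanceA k m (inl (i, j)) < ∑ _i : Fin k, (k : ℚ)⁻¹ :=
            sum_lt_sum (fun i _ => hle i)
              ⟨⟨1, by omega⟩, mem_univ _, by simp [balanceA, show 1 < m by omega, hk]⟩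
        _ = 1 := sum_inv_card_fin hk
  · rintro (⟨i, j⟩ | _)
    · simp only [balanceA, pProfile'_inl, pProfile, hwait, mem_insert, mem_singleton, reduceCtorEq,
        inl.injEq, Fin.ext_iff, or_false, add_zero]
      split_ifs <;> first | omega | rfl
    · simp [balanceA, pProfile'_inr, hwait, Fin.ext_iff]
      omega

lemma phragmenChain_pProfile'_firstA (hk : 0 < k) :
    ∀ m, 2 ≤ m → m ≤ k →
      PhragmenChain (pProfile' k hk) (pTb k) m (firstA k m, balanceA k m)
  | 2, _, hk₂ =>
    ⟨_, ⟨(∅, 0), ⟨rfl, rfl⟩, phragmenStep_pProfile'_firstA_one hk⟩,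
      phragmenStep_pProfile'_firstA_two hk hk₂⟩
  | m + 3, _, hm =>
    ⟨_, phragmenChain_pProfile'_firstA hk (m + 2) (by omega) (by omega),
      phragmenStep_pProfile'_firstA_succ hk (by omega) hm⟩

lemma exists_phragmenChain_pProfile'_pAset (hk : 0 < k) :
    ∃ μ, PhragmenChain (pProfile' k hk) (pTb k) k (pAset k, μ) := by
  rw [← firstA_self]
  obtain rfl | hk₂ := (show k = 1 ∨ 2 ≤ k by omega)
  · exact ⟨_, _, ⟨rfl, rfl⟩, phragmenStep_pProfile'_firstA_one hk⟩
  · exact ⟨_, phragmenChain_pProfile'_firstA hk k hk₂ le_rfl⟩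

end RunA

/-- Phragmén's sequential rule outputs `B` on the original election
and `A` after a single added approval; `A` and `B` are disjoint, hence Phragmén
is `k`-Add-robust. -/
theorem phragmen_k_add_robust (k : ℕ) (hk : 0 < k) :
    (∃ μ : ((Fin k × Fin k) ⊕ Unit) → ℚ,
      PhragmenChain (pProfile k) (pTb k) k (pBset k, μ)) ∧
    (∀ (W : Finset (PCand k)) (μ : ((Fin k × Fin k) ⊕ Unit) → ℚ),
      PhragmenChain (pProfile k) (pTb k) k (W, μ) → W = pBset k) ∧
    (∃ μ : ((Fin k × Fin k) ⊕ Unit) → ℚ,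
      PhragmenChain (pProfile' k hk) (pTb k) k (pAset k, μ)) ∧
    (∀ (W : Finset (PCand k)) (μ : ((Fin k × Fin k) ⊕ Unit) → ℚ),
      PhragmenChain (pProfile' k hk) (pTb k) k (W, μ) → W = pAset k) ∧
    Disjoint (pAset k) (pBset k) := by
  have hB : PhragmenChain (pProfile k) (pTb k) k (pBset k, balanceB k k) :=
    firstB_self (k := k) ▸ phragmenChain_pProfile_firstB hk k hk le_rfl
  obtain ⟨μA, hA⟩ := exists_phragmenChain_pProfile'_pAset hk
  refine ⟨⟨_, hB⟩, fun W μ h => congrArg Prod.fst (h.unique pTb_injective hB), ⟨_, hA⟩,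
    fun W μ h => congrArg Prod.fst (h.unique pTb_injective hA), ?_⟩
  simp [pAset, pBset, disjoint_left]
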